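/- Let Ω ⊂ ℝ² be bounded open with Lipschitz boundary, β > 0, α = 0, and g_i : Ω → ℝ measurable with 0 < c_g ≤ g_i(x) ≤ 1 for all x ∈ Ω and i = 1,…,M (M ≥ 1). Let ∇I ∈ L^∞(Ω)², I_t ∈ L²(Ω), û^i ∈ ℝ². Then the functional F(u) = ∫_Ω (∇I·u + I_t)² dx + β ∑_{i=1}^M ∫_Ω g_i(x) |u(x) − û^i|² dx has a unique minimizer in L²(Ω)², characterized by a(u,v) = b(v) for all v ∈ L²(Ω)², where a(u,v) = 2∫_Ω(∇I·u)(∇I·v) + 2β∑_i∫_Ω g_i(u·v) and b(v) = −2∫_Ω I_t(∇I·v) + 2β∑_i∫_Ω g_i(û^i·v). -/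

import Mathlib

/-!
Without a gradient regulariser the functional is a pointwise quadratic in `u x`:
`F (u + t v) = F u + t (a(u, v) - b(v)) + t² / 2 · a(v, v)`, and `a(v, v) ≥ 2 β M c_g ‖v‖²`
because the bubble weights sum to at least `M c_g`. Hence the minimizers are exactly the
solutions of `a(u, ·) = b`, and there is at most one. A solution is built pointwise: it suffices
that `(∇I·u + I_t) ∇I + β ∑ᵢ gᵢ (u - ûⁱ) = 0` a.e., i.e. `(β G + ∇I ∇Iᵀ) u = β ∑ᵢ gᵢ ûⁱ - I_t ∇I`
with `G = ∑ᵢ gᵢ ≥ M c_g`, which the Sherman–Morrison formula solves with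
`|u| ≤ 2 (β M c_g)⁻¹ |β ∑ᵢ gᵢ ûⁱ - I_t ∇I|`, so that `u ∈ L²`.
-/

open MeasureTheory
open scoped RealInnerProductSpace ENNReal

theorem forall_le_iff_of_expansion {V : Type*} [AddCommGroup V] [Module ℝ V]
    {F b : V → ℝ} {a : V → V → ℝ}
    (hF : ∀ u v (t : ℝ), F (u + t • v) = F u + t * (a u v - b v) + t ^ 2 / 2 * a v v)
    (ha : ∀ v, 0 ≤ a v v) (u : V) :
    (∀ w, F u ≤ F w) ↔ ∀ v, a u v = b v := by
  refine ⟨fun hmin v => ?_, fun hab w => ?_⟩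
  · have hdisc : discrim (a v v / 2) (a u v - b v) 0 ≤ 0 := discrim_le_zero fun t => by
      have := hmin (u + t • v)
      rw [hF] at this
      linarith
    rw [discrim] at hdisc
    nlinarith [sq_nonneg (a u v - b v)]
  · have := hF u (w - u) 1
    rw [one_smul, add_sub_cancel, hab, sub_self] at this
    linarith [ha (w - u)]

theorem existsUnique_forall_le_of_expansion {V : Type*} [NormedAddCommGroup V] [Module ℝ V]
    {F b : V → ℝ} {a : V → V → ℝ} {c : ℝ}
    (hF : ∀ u v (t : ℝ), F (u + t • v) = F u + t * (a u v - b v) + t ^ 2 / 2 * a v v)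
    (hc : 0 < c) (ha : ∀ v, c * ‖v‖ ^ 2 ≤ a v v) (hsol : ∃ u, ∀ v, a u v = b v) :
    ∃! u, ∀ w, F u ≤ F w := by
  have ha₀ : ∀ v, 0 ≤ a v v := fun v => le_trans (by positivity) (ha v)
  obtain ⟨u, hu⟩ := hsol
  refine ⟨u, (forall_le_iff_of_expansion hF ha₀ u).2 hu, fun w hw => ?_⟩
  have hexp := hF u (w - u) 1
  rw [one_smul, add_sub_cancel, hu, sub_self] at hexp
  have hsq : c * ‖w - u‖ ^ 2 ≤ 0 := by linarith [ha (w - u), hw u]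
  have : ‖w - u‖ ^ 2 = 0 := le_antisymm (nonpos_of_mul_nonpos_right hsq hc) (sq_nonneg _)
  simpa [sub_eq_zero] using this

section ShermanMorrison

variable {E : Type*} [NormedAddCommGroup E] [InnerProductSpace ℝ E]

/-- The solution `f` of `γ f + ⟪w, f⟫ w = z`, by the Sherman–Morrison formula for
`(γ + w wᵀ)⁻¹`. -/
noncomputable def shermanMorrisonSolve (γ : ℝ) (w z : E) : E :=
  γ⁻¹ • (z - ((γ + ‖w‖ ^ 2)⁻¹ * ⟪w, z⟫) • w)

variable {γ : ℝ} (w z : E)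

theorem inner_shermanMorrisonSolve_smul_add_smul (hγ : 0 < γ) :
    ⟪w, shermanMorrisonSolve γ w z⟫ • w + γ • shermanMorrisonSolve γ w z = z := by
  have hD : 0 < γ + ‖w‖ ^ 2 := by positivity
  have hinner : ⟪w, shermanMorrisonSolve γ w z⟫ = (γ + ‖w‖ ^ 2)⁻¹ * ⟪w, z⟫ := by
    rw [shermanMorrisonSolve, inner_smul_right, inner_sub_right, inner_smul_right,
      real_inner_self_eq_norm_sq]
    field_simp
    ring
  rw [hinner, shermanMorrisonSolve, smul_smul, mul_inv_cancel₀ hγ.ne', one_smul,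
    add_sub_cancel]

theorem norm_shermanMorrisonSolve_le (hγ : 0 < γ) :
    ‖shermanMorrisonSolve γ w z‖ ≤ 2 * γ⁻¹ * ‖z‖ := by
  have hD : 0 < γ + ‖w‖ ^ 2 := by positivity
  have hκ : ‖((γ + ‖w‖ ^ 2)⁻¹ * ⟪w, z⟫) • w‖ ≤ ‖z‖ := by
    rw [norm_smul, norm_mul, norm_inv, Real.norm_of_nonneg hD.le, mul_assoc,
      inv_mul_le_iff₀ hD]
    have := norm_inner_le_norm (𝕜 := ℝ) w z
    nlinarith [mul_le_mul_of_nonneg_right this (norm_nonneg w), norm_nonneg z]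
  rw [shermanMorrisonSolve, norm_smul, norm_inv, Real.norm_of_nonneg hγ.le, mul_comm 2,
    mul_assoc]
  gcongr
  linarith [norm_sub_le z (((γ + ‖w‖ ^ 2)⁻¹ * ⟪w, z⟫) • w)]

end ShermanMorrison

section WeightedL2

variable {α : Type*} [MeasurableSpace α] {μ : Measure α}
  {E : Type*} [NormedAddCommGroup E] [InnerProductSpace ℝ E]

theorem MeasureTheory.MemLp.integrable_inner {f h : α → E} (hf : MemLp f 2 μ)
    (hh : MemLp h 2 μ) : Integrable (fun x => ⟪f x, h x⟫) μ :=
  (hf.norm.integrable_mul hh.norm).mono' (hf.1.inner hh.1)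
    (ae_of_all _ fun x => norm_inner_le_norm (f x) (h x))

theorem MeasureTheory.MemLp.integrable_mul_inner {ρ : α → ℝ} (hρ : MemLp ρ ∞ μ) {f h : α → E}
    (hf : MemLp f 2 μ) (hh : MemLp h 2 μ) : Integrable (fun x => ρ x * ⟪f x, h x⟫) μ :=
  (hf.integrable_inner hh).mul_of_top_right hρ

theorem MeasureTheory.MemLp.integrable_mul_norm_sq {ρ : α → ℝ} (hρ : MemLp ρ ∞ μ) {f : α → E}
    (hf : MemLp f 2 μ) : Integrable (fun x => ρ x * ‖f x‖ ^ 2) μ := by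
  simpa only [real_inner_self_eq_norm_sq] using hρ.integrable_mul_inner hf hf

theorem MeasureTheory.MemLp.inner_of_memLp_top {p : ℝ≥0∞} {w f : α → E} (hw : MemLp w ∞ μ)
    (hf : MemLp f p μ) : MemLp (fun x => ⟪w x, f x⟫) p μ :=
  (hf.norm.smul hw.norm).mono (hw.1.inner hf.1)
    (ae_of_all _ fun x => by simpa using norm_inner_le_norm (𝕜 := ℝ) (w x) (f x))

theorem MeasureTheory.L2.norm_sq_eq_integral_norm_sq (f : Lp E 2 μ) :
    ‖f‖ ^ 2 = ∫ x, ‖f x‖ ^ 2 ∂μ := by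
  simp only [← real_inner_self_eq_norm_sq, L2.inner_def]

theorem integral_mul_norm_add_smul_sq {ρ : α → ℝ} (hρ : MemLp ρ ∞ μ) {f h : α → E}
    (hf : MemLp f 2 μ) (hh : MemLp h 2 μ) (t : ℝ) :
    ∫ x, ρ x * ‖f x + t • h x‖ ^ 2 ∂μ =
      ∫ x, ρ x * ‖f x‖ ^ 2 ∂μ + t * (2 * ∫ x, ρ x * ⟪f x, h x⟫ ∂μ) +
        t ^ 2 * ∫ x, ρ x * ‖h x‖ ^ 2 ∂μ := by
  have h₀ := hρ.integrable_mul_norm_sq hf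
  have h₁ := (hρ.integrable_mul_inner hf hh).const_mul (t * 2)
  have h₂ := (hρ.integrable_mul_norm_sq hh).const_mul (t ^ 2)
  have h₀₁ : Integrable (fun x => ρ x * ‖f x‖ ^ 2 + t * 2 * (ρ x * ⟪f x, h x⟫)) μ := h₀.add h₁
  calc ∫ x, ρ x * ‖f x + t • h x‖ ^ 2 ∂μ
      = ∫ x, ρ x * ‖f x‖ ^ 2 + t * 2 * (ρ x * ⟪f x, h x⟫) + t ^ 2 * (ρ x * ‖h x‖ ^ 2) ∂μ := by
        congr 1 with x
        rw [norm_add_sq_real, inner_smul_right, norm_smul, mul_pow, Real.norm_eq_abs, sq_abs]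
        ring
    _ = _ := by
        rw [integral_add h₀₁ h₂, integral_add h₀ h₁, integral_const_mul,
          integral_const_mul]
        ring

end WeightedL2

namespace OpticalFlow

variable {α : Type*} [MeasurableSpace α] (μ : Measure α)
  {E : Type*} [NormedAddCommGroup E] [InnerProductSpace ℝ E] {ι : Type*} [Fintype ι]
  (w : α → E) (It : α → ℝ) (β : ℝ) (g : ι → α → ℝ) (uhat : ι → E)

/-- `w` stands for `∇I`, `It` for `I_t`; `energy`, `bilin` and `rhs` are the paper's `F`, `a`, `b`. -/
noncomputable def energy (u : α → E) : ℝ :=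
  (∫ x, (⟪w x, u x⟫ + It x) ^ 2 ∂μ) + β * ∑ i, ∫ x, g i x * ‖u x - uhat i‖ ^ 2 ∂μ

noncomputable def bilin (u v : α → E) : ℝ :=
  2 * (∫ x, ⟪w x, u x⟫ * ⟪w x, v x⟫ ∂μ) + 2 * β * ∑ i, ∫ x, g i x * ⟪u x, v x⟫ ∂μ

noncomputable def rhs (v : α → E) : ℝ :=
  -2 * (∫ x, It x * ⟪w x, v x⟫ ∂μ) + 2 * β * ∑ i, ∫ x, g i x * ⟪uhat i, v x⟫ ∂μ

/-- Half the gradient of the integrand of `energy` at `u x`. -/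
def residual (u : α → E) (x : α) : E :=
  (⟪w x, u x⟫ + It x) • w x + β • ∑ i, g i x • (u x - uhat i)

variable {μ w It β g uhat} {u v : α → E}

theorem energy_congr_ae {u' : α → E} (h : u =ᵐ[μ] u') :
    energy μ w It β g uhat u = energy μ w It β g uhat u' := by
  unfold energy
  congr 1
  · exact integral_congr_ae (h.mono fun x hx => by simp only [hx])
  · refine congrArg (β * ·) (Finset.sum_congr rfl fun i _ => ?_)
    exact integral_congr_ae (h.mono fun x hx => by simp only [hx])

theorem mul_norm_sq_le_bilin {c : ℝ} (hβ : 0 ≤ β) (hg : ∀ i, MemLp (g i) ∞ μ)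
    (hG : ∀ᵐ x ∂μ, c ≤ ∑ i, g i x) (v : Lp E 2 μ) :
    2 * β * c * ‖v‖ ^ 2 ≤ bilin μ w β g ⇑v ⇑v := by
  have hv := Lp.memLp v
  have hv2 := (memLp_two_iff_integrable_sq_norm hv.1).1 hv
  have hbubble : c * ∫ x, ‖v x‖ ^ 2 ∂μ ≤ ∑ i, ∫ x, g i x * ⟪v x, v x⟫ ∂μ := by
    rw [← integral_const_mul, ← integral_finsetSum _ fun i _ => (hg i).integrable_mul_inner hv hv]
    refine integral_mono_ae (hv2.const_mul c)
      (integrable_finsetSum _ fun i _ => (hg i).integrable_mul_inner hv hv) ?_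
    filter_upwards [hG] with x hx
    rw [← Finset.sum_mul, real_inner_self_eq_norm_sq]
    exact mul_le_mul_of_nonneg_right hx (sq_nonneg _)
  have hdata : 0 ≤ ∫ x, ⟪w x, v x⟫ * ⟪w x, v x⟫ ∂μ := integral_nonneg fun x => mul_self_nonneg _
  rw [bilin, L2.norm_sq_eq_integral_norm_sq]
  nlinarith [mul_le_mul_of_nonneg_left hbubble hβ]

variable [IsFiniteMeasure μ]

theorem bilin_sub_rhs (hw : MemLp w ∞ μ) (hIt : MemLp It 2 μ) (hg : ∀ i, MemLp (g i) ∞ μ)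
    (hu : MemLp u 2 μ) (hv : MemLp v 2 μ) :
    bilin μ w β g u v - rhs μ w It β g uhat v =
      2 * (∫ x, (⟪w x, u x⟫ + It x) * ⟪w x, v x⟫ ∂μ) +
        2 * β * ∑ i, ∫ x, g i x * ⟪u x - uhat i, v x⟫ ∂μ := by
  have hwv := hw.inner_of_memLp_top hv
  have hdata : ∫ x, (⟪w x, u x⟫ + It x) * ⟪w x, v x⟫ ∂μ =
      (∫ x, ⟪w x, u x⟫ * ⟪w x, v x⟫ ∂μ) + ∫ x, It x * ⟪w x, v x⟫ ∂μ := by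
    simp only [add_mul]
    exact integral_add ((hw.inner_of_memLp_top hu).integrable_mul hwv) (hIt.integrable_mul hwv)
  have hbubble : ∀ i, ∫ x, g i x * ⟪u x - uhat i, v x⟫ ∂μ =
      (∫ x, g i x * ⟪u x, v x⟫ ∂μ) - ∫ x, g i x * ⟪uhat i, v x⟫ ∂μ := fun i => by
    rw [← integral_sub ((hg i).integrable_mul_inner hu hv)
      ((hg i).integrable_mul_inner (memLp_const (uhat i)) hv)]
    simp only [inner_sub_left, mul_sub]
  simp only [bilin, rhs, hdata, hbubble, Finset.sum_sub_distrib]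
  ring

theorem energy_add_smul (hw : MemLp w ∞ μ) (hIt : MemLp It 2 μ) (hg : ∀ i, MemLp (g i) ∞ μ)
    (hu : MemLp u 2 μ) (hv : MemLp v 2 μ) (t : ℝ) :
    energy μ w It β g uhat (u + t • v) = energy μ w It β g uhat u +
      t * (bilin μ w β g u v - rhs μ w It β g uhat v) + t ^ 2 / 2 * bilin μ w β g v v := by
  have hdata : ∫ x, (⟪w x, u x + t • v x⟫ + It x) ^ 2 ∂μ =
      (∫ x, (⟪w x, u x⟫ + It x) ^ 2 ∂μ) +
        t * (2 * ∫ x, (⟪w x, u x⟫ + It x) * ⟪w x, v x⟫ ∂μ) +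
          t ^ 2 * ∫ x, ⟪w x, v x⟫ ^ 2 ∂μ := by
    calc ∫ x, (⟪w x, u x + t • v x⟫ + It x) ^ 2 ∂μ
        = ∫ x, 1 * ‖(⟪w x, u x⟫ + It x) + t • ⟪w x, v x⟫‖ ^ 2 ∂μ := by
          congr with x
          rw [one_mul, Real.norm_eq_abs, sq_abs, inner_add_right, inner_smul_right, smul_eq_mul]
          ring
      _ = _ := integral_mul_norm_add_smul_sq (memLp_top_const 1)
          ((hw.inner_of_memLp_top hu).add hIt) (hw.inner_of_memLp_top hv) t
      _ = _ := by simp only [one_mul, Real.norm_eq_abs, sq_abs, Real.inner_apply, Pi.add_apply]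
  have hbubble : ∀ i, ∫ x, g i x * ‖u x + t • v x - uhat i‖ ^ 2 ∂μ =
      (∫ x, g i x * ‖u x - uhat i‖ ^ 2 ∂μ) +
        t * (2 * ∫ x, g i x * ⟪u x - uhat i, v x⟫ ∂μ) +
          t ^ 2 * ∫ x, g i x * ⟪v x, v x⟫ ∂μ := fun i => by
    simp only [real_inner_self_eq_norm_sq, add_sub_right_comm _ (t • v _)]
    exact integral_mul_norm_add_smul_sq (hg i) (hu.sub (memLp_const (uhat i))) hv t
  rw [bilin_sub_rhs hw hIt hg hu hv]
  simp only [energy, bilin, Pi.add_apply, Pi.smul_apply, hdata, hbubble, Finset.sum_add_distrib,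
    ← Finset.mul_sum, ← sq]
  ring

theorem bilin_eq_rhs_of_residual (hw : MemLp w ∞ μ) (hIt : MemLp It 2 μ)
    (hg : ∀ i, MemLp (g i) ∞ μ) (hu : MemLp u 2 μ) (hv : MemLp v 2 μ)
    (hres : ∀ᵐ x ∂μ, residual w It β g uhat u x = 0) :
    bilin μ w β g u v = rhs μ w It β g uhat v := by
  have hbubble : ∀ i, Integrable (fun x => g i x * ⟪u x - uhat i, v x⟫) μ := fun i =>
    (hg i).integrable_mul_inner (hu.sub (memLp_const (uhat i))) hv
  have hdata : ∫ x, (⟪w x, u x⟫ + It x) * ⟪w x, v x⟫ ∂μ =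
      -(β * ∑ i, ∫ x, g i x * ⟪u x - uhat i, v x⟫ ∂μ) := by
    rw [← integral_finsetSum _ fun i _ => hbubble i, ← integral_const_mul, ← integral_neg]
    refine integral_congr_ae (hres.mono fun x hx => ?_)
    have := congrArg (⟪·, v x⟫) hx
    simp only [residual, inner_add_left, inner_smul_left, sum_inner, inner_zero_left,
      RCLike.conj_to_real] at this
    linarith
  rw [← sub_eq_zero, bilin_sub_rhs hw hIt hg hu hv, hdata]
  ring

theorem exists_memLp_residual_eq_zero {c : ℝ} (hβ : 0 < β) (hc : 0 < c)
    (hG : ∀ᵐ x ∂μ, c ≤ ∑ i, g i x) (hw : MemLp w ∞ μ) (hIt : MemLp It 2 μ)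
    (hg : ∀ i, MemLp (g i) ∞ μ) :
    ∃ u, MemLp u 2 μ ∧ ∀ᵐ x ∂μ, residual w It β g uhat u x = 0 := by
  set γ : α → ℝ := fun x => β * ∑ i, g i x
  set z : α → E := fun x => β • ∑ i, g i x • uhat i - It x • w x
  have hγ : AEMeasurable γ μ :=
    (Finset.aemeasurable_fun_sum _ fun i _ => (hg i).1.aemeasurable).const_mul β
  have hz : MemLp z 2 μ :=
    ((memLp_finsetSum _ fun i _ => (memLp_const (p := 2) (uhat i)).smul (hg i)).const_smul β).sub
      (hw.smul hIt)
  have hβc : 0 < β * c := mul_pos hβ hc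
  have hγc : ∀ᵐ x ∂μ, β * c ≤ γ x := hG.mono fun x hx => mul_le_mul_of_nonneg_left hx hβ.le
  refine ⟨fun x => shermanMorrisonSolve (γ x) (w x) (z x), hz.of_le_mul (c := 2 * (β * c)⁻¹)
    ?_ ?_, hγc.mono fun x hx => ?_⟩
  · have hD : AEMeasurable (fun x => (γ x + ‖w x‖ ^ 2)⁻¹) μ :=
      (hγ.add (hw.1.norm.aemeasurable.pow_const 2)).inv
    exact hγ.inv.aestronglyMeasurable.smul <| hz.1.sub <|
      (hD.mul (hw.1.inner hz.1).aemeasurable).aestronglyMeasurable.smul hw.1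
  · filter_upwards [hγc] with x hx
    calc _ ≤ 2 * (γ x)⁻¹ * ‖z x‖ := norm_shermanMorrisonSolve_le _ _ (hβc.trans_le hx)
      _ ≤ 2 * (β * c)⁻¹ * ‖z x‖ := by gcongr
  · have := inner_shermanMorrisonSolve_smul_add_smul (w x) (z x) (hβc.trans_le hx)
    simp only [residual, smul_sub, Finset.sum_sub_distrib, ← Finset.sum_smul]
    linear_combination (norm := module) this

theorem energy_coeFn_add_smul (hw : MemLp w ∞ μ) (hIt : MemLp It 2 μ)
    (hg : ∀ i, MemLp (g i) ∞ μ) (u v : Lp E 2 μ) (t : ℝ) :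
    energy μ w It β g uhat ⇑(u + t • v) = energy μ w It β g uhat ⇑u +
      t * (bilin μ w β g ⇑u ⇑v - rhs μ w It β g uhat ⇑v) + t ^ 2 / 2 * bilin μ w β g ⇑v ⇑v := by
  have h : ⇑(u + t • v) =ᵐ[μ] ⇑u + t • ⇑v := by
    filter_upwards [Lp.coeFn_add u (t • v), Lp.coeFn_smul t v] with x h₁ h₂
    rw [h₁, Pi.add_apply, h₂, Pi.add_apply]
  rw [energy_congr_ae h, energy_add_smul hw hIt hg (Lp.memLp u) (Lp.memLp v)]

theorem exists_bilin_eq_rhs {c : ℝ} (hβ : 0 < β) (hc : 0 < c)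
    (hG : ∀ᵐ x ∂μ, c ≤ ∑ i, g i x) (hw : MemLp w ∞ μ) (hIt : MemLp It 2 μ)
    (hg : ∀ i, MemLp (g i) ∞ μ) :
    ∃ u : Lp E 2 μ, ∀ v : Lp E 2 μ, bilin μ w β g ⇑u ⇑v = rhs μ w It β g uhat ⇑v := by
  obtain ⟨u, hu, hres⟩ := exists_memLp_residual_eq_zero (uhat := uhat) hβ hc hG hw hIt hg
  refine ⟨hu.toLp u, fun v => bilin_eq_rhs_of_residual hw hIt hg (Lp.memLp _) (Lp.memLp v) ?_⟩
  filter_upwards [hu.coeFn_toLp, hres] with x h₁ h₂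
  simpa only [residual, h₁] using h₂

end OpticalFlow

theorem bubble_regularized_optical_flow_wellposed_L2_general
    (Ω : Set (EuclideanSpace ℝ (Fin 2)))
    (hΩb : Bornology.IsBounded Ω) (hΩo : IsOpen Ω)
    (β : ℝ) (hβ : 0 < β) (M : ℕ) (hM : 1 ≤ M)
    (g : Fin M → EuclideanSpace ℝ (Fin 2) → ℝ)
    (hgm : ∀ i, Measurable (g i))
    (c_g : ℝ) (hcg : 0 < c_g)
    (hg_lb : ∀ i, ∀ x ∈ Ω, c_g ≤ g i x) (hg_ub : ∀ i, ∀ x ∈ Ω, g i x ≤ 1)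
    (gradI : EuclideanSpace ℝ (Fin 2) → EuclideanSpace ℝ (Fin 2))
    (hgradI : MemLp gradI ⊤ (volume.restrict Ω))
    (It : EuclideanSpace ℝ (Fin 2) → ℝ)
    (hIt : MemLp It 2 (volume.restrict Ω))
    (uhat : Fin M → EuclideanSpace ℝ (Fin 2))
    (F : Lp (EuclideanSpace ℝ (Fin 2)) 2 (volume.restrict Ω) → ℝ)
    (hF : ∀ u, F u =
      (∫ x, (⟪gradI x, u x⟫ + It x) ^ 2 ∂(volume.restrict Ω)) +
        β * ∑ i : Fin M, ∫ x, g i x * ‖u x - uhat i‖ ^ 2 ∂(volume.restrict Ω))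
    (a : Lp (EuclideanSpace ℝ (Fin 2)) 2 (volume.restrict Ω) →
         Lp (EuclideanSpace ℝ (Fin 2)) 2 (volume.restrict Ω) → ℝ)
    (hA : ∀ u v, a u v =
      2 * (∫ x, ⟪gradI x, u x⟫ * ⟪gradI x, v x⟫ ∂(volume.restrict Ω)) +
        2 * β * ∑ i : Fin M, ∫ x, g i x * ⟪u x, v x⟫ ∂(volume.restrict Ω))
    (b : Lp (EuclideanSpace ℝ (Fin 2)) 2 (volume.restrict Ω) → ℝ)
    (hB : ∀ v, b v =
      -2 * (∫ x, It x * ⟪gradI x, v x⟫ ∂(volume.restrict Ω)) +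
        2 * β * ∑ i : Fin M, ∫ x, g i x * ⟪uhat i, v x⟫ ∂(volume.restrict Ω)) :
    (∃! u : Lp (EuclideanSpace ℝ (Fin 2)) 2 (volume.restrict Ω),
        ∀ w, F u ≤ F w) ∧
    (∀ u : Lp (EuclideanSpace ℝ (Fin 2)) 2 (volume.restrict Ω),
        (∀ w, F u ≤ F w) ↔ (∀ v, a u v = b v)) := by
  have : IsFiniteMeasure (volume.restrict Ω) := isFiniteMeasure_restrict.2 hΩb.measure_lt_top.ne
  have hΩ : ∀ᵐ x ∂volume.restrict Ω, x ∈ Ω := ae_restrict_mem hΩo.measurableSet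
  have hg : ∀ i, MemLp (g i) ∞ (volume.restrict Ω) := fun i =>
    memLp_top_of_bound (hgm i).aestronglyMeasurable 1 <| hΩ.mono fun x hx =>
      abs_le.2 ⟨by linarith [hg_lb i x hx], hg_ub i x hx⟩
  have hG : ∀ᵐ x ∂volume.restrict Ω, M * c_g ≤ ∑ i, g i x := hΩ.mono fun x hx => by
    simpa using Finset.card_nsmul_le_sum Finset.univ _ _ fun i _ => hg_lb i x hx
  have hc : 0 < M * c_g := mul_pos (Nat.cast_pos.2 hM) hcg
  obtain rfl := funext hF
  obtain rfl := funext fun u => funext (hA u)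
  obtain rfl := funext hB
  have hexp := OpticalFlow.energy_coeFn_add_smul (β := β) (uhat := uhat) hgradI hIt hg
  have hcoer := OpticalFlow.mul_norm_sq_le_bilin (w := gradI) hβ.le hg hG
  exact ⟨existsUnique_forall_le_of_expansion hexp (by positivity) hcoer
      (OpticalFlow.exists_bilin_eq_rhs hβ hc hG hgradI hIt hg),
    forall_le_iff_of_expansion hexp fun v => le_trans (by positivity) (hcoer v)⟩

/-- Theorem 3.3 of the paper: with `α = 0`, `β > 0` and Gaussian
weights bounded below by `c_g > 0`, the functional
`F(u) = ∫_Ω (∇I·u + I_t)² + β ∑ᵢ ∫_Ω gᵢ |u − ûⁱ|²`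
has a unique minimizer over `L²(Ω)²`, characterized by the variational equation
`a(u,v) = b(v)` for all `v ∈ L²(Ω)²`. -/
theorem bubble_regularized_optical_flow_wellposed_L2
    (Ω : Set (EuclideanSpace ℝ (Fin 2)))
    (hΩne : Ω.Nonempty) (hΩb : Bornology.IsBounded Ω) (hΩo : IsOpen Ω)
    (β : ℝ) (hβ : 0 < β) (M : ℕ) (hM : 1 ≤ M)
    (g : Fin M → EuclideanSpace ℝ (Fin 2) → ℝ)
    (hgm : ∀ i, Measurable (g i))
    (c_g : ℝ) (hcg : 0 < c_g)
    (hg_lb : ∀ i, ∀ x ∈ Ω, c_g ≤ g i x) (hg_ub : ∀ i, ∀ x ∈ Ω, g i x ≤ 1)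
    (gradI : EuclideanSpace ℝ (Fin 2) → EuclideanSpace ℝ (Fin 2))
    (hgradI : MemLp gradI ⊤ (volume.restrict Ω))
    (It : EuclideanSpace ℝ (Fin 2) → ℝ)
    (hIt : MemLp It 2 (volume.restrict Ω))
    (uhat : Fin M → EuclideanSpace ℝ (Fin 2))
    (F : Lp (EuclideanSpace ℝ (Fin 2)) 2 (volume.restrict Ω) → ℝ)
    (hF : ∀ u, F u =
      (∫ x, (⟪gradI x, u x⟫ + It x) ^ 2 ∂(volume.restrict Ω)) +
        β * ∑ i : Fin M, ∫ x, g i x * ‖u x - uhat i‖ ^ 2 ∂(volume.restrict Ω))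
    (a : Lp (EuclideanSpace ℝ (Fin 2)) 2 (volume.restrict Ω) →
         Lp (EuclideanSpace ℝ (Fin 2)) 2 (volume.restrict Ω) → ℝ)
    (hA : ∀ u v, a u v =
      2 * (∫ x, ⟪gradI x, u x⟫ * ⟪gradI x, v x⟫ ∂(volume.restrict Ω)) +
        2 * β * ∑ i : Fin M, ∫ x, g i x * ⟪u x, v x⟫ ∂(volume.restrict Ω))
    (b : Lp (EuclideanSpace ℝ (Fin 2)) 2 (volume.restrict Ω) → ℝ)
    (hB : ∀ v, b v =
      -2 * (∫ x, It x * ⟪gradI x, v x⟫ ∂(volume.restrict Ω)) +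
        2 * β * ∑ i : Fin M, ∫ x, g i x * ⟪uhat i, v x⟫ ∂(volume.restrict Ω)) :
    (∃! u : Lp (EuclideanSpace ℝ (Fin 2)) 2 (volume.restrict Ω),
        ∀ w, F u ≤ F w) ∧
    (∀ u : Lp (EuclideanSpace ℝ (Fin 2)) 2 (volume.restrict Ω),
        (∀ w, F u ≤ F w) ↔ (∀ v, a u v = b v)) :=
  bubble_regularized_optical_flow_wellposed_L2_general Ω hΩb hΩo β hβ M hM g hgm c_g hcg hg_lb hg_ub
    gradI hgradI It hIt uhat F hF a hA b hB
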